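/- Let (z₁,z₂,z₃) ∈ ℍ³ satisfy the three equations (E1) Log z₃ = Log z₁″ + Log z₂′, (E2) Log z₃ = Log z₁ - Log z₂″, and (E3) Log z₁ + Log z₂′ + 3·Log z₃′ = 2πi. Then Re S(ψ(z₁,z₂,z₃)) = -(D(z₁) + D(z₂) + 3·D(z₃)), where D is the Bloch–Wigner function. (Since D(z_j) is the hyperbolic volume of the ideal tetrahedron of shape z_j, this says Re S at the critical point equals minus the hyperbolic volume of S³∖7₃.) -/

import Mathlib

open Real

/-- The dilogarithm `Li₂(z) = -∫₀¹ Log(1 - z t)/t dt`. -/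
noncomputable def Li2 (z : ℂ) : ℂ :=
  -∫ t in (0:ℝ)..1, Complex.log (1 - z * (t : ℂ)) / (t : ℂ)

/-- The potential function `S`. -/
noncomputable def pot (y₁ y₂ y₃ : ℂ) : ℂ :=
  Complex.I * (y₁ ^ 2 - y₁ * y₂ + y₂ * y₃ + y₃ ^ 2 / 2) +
    (-(π : ℂ) * y₁ + (π : ℂ) * y₃) +
    Complex.I * Li2 (-Complex.exp y₁) - Complex.I * Li2 (-Complex.exp y₂) +
    3 * Complex.I * Li2 (-Complex.exp y₃)

/-- First/third component of `ψ`: `Log z - iπ`. -/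
noncomputable def psiP (z : ℂ) : ℂ := Complex.log z - (π : ℂ) * Complex.I

/-- Second component of `ψ`: `-(Log z - iπ)`. -/
noncomputable def psiM (z : ℂ) : ℂ := -(Complex.log z - (π : ℂ) * Complex.I)

/-- The Bloch–Wigner function `D(z) = Im Li₂(z) + arg(1-z)·log|z|`. -/
noncomputable def BW (z : ℂ) : ℝ :=
  (Li2 z).im + (1 - z).arg * Real.log ‖z‖

/-
At `ψ(z)` the dilogarithms of `S` are evaluated at `-e^{y₁} = z₁`, `-e^{y₂} = 1/z₂` and
`-e^{y₃} = z₃`. Differentiating under the integral sign gives `Li₂'(z) = -Log(1 - z)/z`, so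
`Li₂(-u) + Li₂(-1/u) + (Log u)²/2` has zero derivative on the slit plane and equals the real
number `2 Li₂(-1)`; this turns `Im Li₂(1/z₂)` into `-Im Li₂(z₂)` plus `-log|z₂| arg(-z₂)`.
What is left of `Re S` is a quadratic expression in the `log|zⱼ|` and `arg zⱼ`, which the
imaginary parts of (E1), (E2), (E3) identify with `-∑ arg(1 - zⱼ) log|zⱼ|`, the remaining
terms of the Bloch–Wigner functions.
-/

open Complex Set MeasureTheory
open scoped Interval

lemma one_sub_mul_ofReal_mem_slitPlane {z : ℂ} (hz : 1 - z ∈ slitPlane) {t : ℝ}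
    (ht : t ∈ Icc (0 : ℝ) 1) : 1 - z * t ∈ slitPlane := by
  have := starConvex_one_slitPlane.add_smul_mem (y := -z) (by rwa [← sub_eq_add_neg]) ht.1 ht.2
  rwa [real_smul, mul_neg, ← sub_eq_add_neg, mul_comm] at this

lemma exists_ball_one_sub_mul_mem_slitPlane {z : ℂ} (hz : 1 - z ∈ slitPlane) :
    ∃ r > 0, ∀ x ∈ Metric.ball z r, ∀ t ∈ Icc (0 : ℝ) 1,
      1 - x * t ∈ slitPlane ∧ r ≤ ‖1 - x * t‖ := by
  obtain ⟨δ, hδ, hsub⟩ := (isCompact_Icc.image (f := fun t : ℝ => 1 - z * t) (by fun_prop)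
    ).exists_thickening_subset_open isOpen_slitPlane
    (image_subset_iff.2 fun t ht => one_sub_mul_ofReal_mem_slitPlane hz ht)
  have hnear : ∀ t ∈ Icc (0 : ℝ) 1, ∀ w, dist w (1 - z * t) < δ → w ∈ slitPlane :=
    fun t ht w hw => hsub (Metric.mem_thickening_iff.2 ⟨_, mem_image_of_mem _ ht, hw⟩)
  refine ⟨δ / 2, by positivity, fun x hx t ht => ?_⟩
  have hclose : dist (1 - x * t) (1 - z * t) < δ / 2 := calc
    dist (1 - x * t) (1 - z * t) = ‖z - x‖ * t := by
      rw [dist_eq_norm, show 1 - x * t - (1 - z * t) = (z - x) * t by ring, norm_mul,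
        norm_real, Real.norm_eq_abs, abs_of_nonneg ht.1]
    _ ≤ ‖z - x‖ := mul_le_of_le_one_right (norm_nonneg _) ht.2
    _ < δ / 2 := by rwa [← dist_eq_norm, dist_comm]
  refine ⟨hnear t ht _ (by linarith), le_of_not_gt fun hsmall => zero_notMem_slitPlane ?_⟩
  refine hnear t ht 0 ?_
  calc dist 0 (1 - z * t) ≤ dist 0 (1 - x * t) + dist (1 - x * t) (1 - z * t) :=
        dist_triangle _ _ _
    _ < δ := by rw [dist_zero_left]; linarith

lemma intervalIntegrable_log_one_sub_mul_div {z : ℂ} (hz : 1 - z ∈ slitPlane) :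
    IntervalIntegrable (fun t : ℝ => log (1 - z * t) / t) volume 0 1 := by
  set f : ℝ → ℂ := fun t => log (1 - z * t)
  have hf : ∀ t ∈ Icc (0 : ℝ) 1, DifferentiableAt ℝ f t := fun t ht =>
    (((hasDerivAt_id (t : ℂ)).const_mul z).const_sub 1 |>.comp_ofReal.clog_real
      (one_sub_mul_ofReal_mem_slitPlane hz ht)).differentiableAt
  -- `log (1 - z t) / t` is the difference quotient of `f` at `0`, which extends continuously
  have hcont : ContinuousOn (dslope f 0) (uIcc 0 1) := by
    rw [uIcc_of_le zero_le_one]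
    intro t ht
    refine ContinuousAt.continuousWithinAt ?_
    rcases eq_or_ne t 0 with rfl | ht0
    · exact continuousAt_dslope_same.2 (hf 0 ht)
    · exact (continuousAt_dslope_of_ne ht0).2 (hf t ht).continuousAt
  refine hcont.intervalIntegrable.congr fun t ht => ?_
  have ht0 : t ≠ 0 := (uIoc_of_le (zero_le_one (α := ℝ)) ▸ ht).1.ne'
  simp [dslope_of_ne _ ht0, slope, f, div_eq_inv_mul]

lemma hasDerivAt_Li2 {z : ℂ} (hz : 1 - z ∈ slitPlane) (hz0 : z ≠ 0) :
    HasDerivAt Li2 (-log (1 - z) / z) z := by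
  obtain ⟨r, hr, hball⟩ := exists_ball_one_sub_mul_mem_slitPlane hz
  have hΙ : ∀ t ∈ Ι (0 : ℝ) 1, t ∈ Icc (0 : ℝ) 1 ∧ (t : ℂ) ≠ 0 := fun t ht => by
    rw [uIoc_of_le zero_le_one] at ht
    exact ⟨Ioc_subset_Icc_self ht, ofReal_ne_zero.2 ht.1.ne'⟩
  have hderiv := intervalIntegral.hasDerivAt_integral_of_dominated_loc_of_deriv_le
    (F := fun (x : ℂ) (t : ℝ) => log (1 - x * t) / t)
    (F' := fun (x : ℂ) (t : ℝ) => -(1 - x * t)⁻¹) (bound := fun _ => r⁻¹)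
    (Metric.ball_mem_nhds z hr)
    (.of_forall fun x =>
      (by fun_prop : Measurable fun t : ℝ => log (1 - x * t) / t).aestronglyMeasurable)
    (intervalIntegrable_log_one_sub_mul_div hz)
    (by fun_prop : Measurable fun t : ℝ => -(1 - z * t)⁻¹).aestronglyMeasurable
    (.of_forall fun t ht x hx => by
      rw [norm_neg, norm_inv]
      exact inv_anti₀ hr (hball x hx t (hΙ t ht).1).2)
    intervalIntegrable_const
    (.of_forall fun t ht x hx => by
      have hmem := (hball x hx t (hΙ t ht).1).1
      refine ((((hasDerivAt_id x).mul_const (t : ℂ)).const_sub 1).clog hmem |>.div_const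
        (t : ℂ)).congr_deriv ?_
      have := slitPlane_ne_zero hmem
      have := (hΙ t ht).2
      field_simp
      simp)
  have hint : ∫ t in (0 : ℝ)..1, -(1 - z * t)⁻¹ = log (1 - z) / z := by
    have h := log_inv_eq_integral hz
    rw [log_inv _ (slitPlane_arg_ne_pi hz)] at h
    simp_rw [real_smul, mul_comm _ z] at h
    rw [intervalIntegral.integral_neg, eq_div_iff hz0]
    linear_combination h
  have hLi2 : Li2 = -fun x : ℂ => ∫ t in (0 : ℝ)..1, log (1 - x * t) / t := rfl
  rw [hLi2, neg_div, ← hint]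
  exact hderiv.2.neg

lemma arg_nonpos_of_im_nonpos {w : ℂ} (hw : w ∈ slitPlane) (h : w.im ≤ 0) : arg w ≤ 0 := by
  have hconj := arg_conj w
  rw [if_neg (slitPlane_arg_ne_pi hw)] at hconj
  have := arg_nonneg_iff.2 (show 0 ≤ (starRingEnd ℂ w).im by simpa using h)
  linarith

lemma log_div_of_im_mul_nonneg {u v : ℂ} (hu : u ∈ slitPlane) (hv : v ∈ slitPlane)
    (huv : 0 ≤ u.im * v.im) : log (u / v) = log u - log v := by
  have hu_lt := lt_of_le_of_ne (arg_le_pi u) (slitPlane_arg_ne_pi hu)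
  have hv_lt := lt_of_le_of_ne (arg_le_pi v) (slitPlane_arg_ne_pi hv)
  have hu_gt := neg_pi_lt_arg u
  have hv_gt := neg_pi_lt_arg v
  -- `u` and `v` lie in the same closed half-plane, so their arguments differ by less than `π`
  have hsame : arg u - arg v ∈ Ioo (-π) π := by
    rcases mul_nonneg_iff.1 huv with ⟨hu0, hv0⟩ | ⟨hu0, hv0⟩
    · have := arg_nonneg_iff.2 hu0
      have := arg_nonneg_iff.2 hv0
      constructor <;> linarith
    · have := arg_nonpos_of_im_nonpos hu hu0
      have := arg_nonpos_of_im_nonpos hv hv0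
      constructor <;> linarith
  rw [div_eq_mul_inv, log_mul (slitPlane_ne_zero hu) (inv_ne_zero (slitPlane_ne_zero hv)),
    log_inv _ (slitPlane_arg_ne_pi hv), sub_eq_add_neg]
  rw [arg_inv, if_neg (slitPlane_arg_ne_pi hv)]
  exact ⟨by linarith [hsame.1], by linarith [hsame.2]⟩

lemma one_add_mem_slitPlane {u : ℂ} (hu : u ∈ slitPlane) : 1 + u ∈ slitPlane := by
  rw [mem_slitPlane_iff] at hu ⊢
  rcases hu with h | h
  · exact .inl (by rw [add_re, one_re]; linarith)
  · right; simpa using h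

lemma inv_mem_slitPlane {u : ℂ} (hu : u ∈ slitPlane) : u⁻¹ ∈ slitPlane := by
  have hn : 0 < normSq u := normSq_pos.2 (slitPlane_ne_zero hu)
  rw [mem_slitPlane_iff] at hu ⊢
  rw [inv_re, inv_im]
  rcases hu with h | h
  · left; positivity
  · right; simp [h, hn.ne']

lemma log_one_add_inv {u : ℂ} (hu : u ∈ slitPlane) :
    log (1 + u⁻¹) = log (1 + u) - log u := by
  rw [← log_div_of_im_mul_nonneg (one_add_mem_slitPlane hu) hu
    (by simpa using mul_self_nonneg u.im)]
  congr 1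
  field_simp [slitPlane_ne_zero hu]
  ring

lemma Li2_neg_add_Li2_neg_inv {u : ℂ} (hu : u ∈ slitPlane) :
    Li2 (-u) + Li2 (-u⁻¹) + log u ^ 2 / 2 = 2 * Li2 (-1) := by
  set g : ℂ → ℂ := fun v => Li2 (-v) + Li2 (-v⁻¹) + log v ^ 2 / 2
  have hg : ∀ u ∈ slitPlane, HasDerivAt g 0 u := by
    intro u hu
    have hu0 := slitPlane_ne_zero hu
    have h₁ := (hasDerivAt_Li2 (by rw [sub_neg_eq_add]; exact one_add_mem_slitPlane hu)
      (neg_ne_zero.2 hu0)).comp u (hasDerivAt_neg u)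
    have h₂ := (hasDerivAt_Li2
      (by rw [sub_neg_eq_add]; exact one_add_mem_slitPlane (inv_mem_slitPlane hu))
      (neg_ne_zero.2 (inv_ne_zero hu0))).comp u (hasDerivAt_inv hu0).neg
    have h₃ := ((hasDerivAt_log hu).pow 2).div_const 2
    refine ((h₁.add h₂).add h₃).congr_deriv ?_
    rw [sub_neg_eq_add, sub_neg_eq_add, log_one_add_inv hu]
    field_simp
    ring
  have := isOpen_slitPlane.is_const_of_deriv_eq_zero
    (starConvex_one_slitPlane.isPathConnected one_mem_slitPlane).isConnected.isPreconnected
    (fun u hu => (hg u hu).differentiableAt.differentiableWithinAt) (fun u hu => (hg u hu).deriv)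
    hu one_mem_slitPlane
  simpa [g, two_mul] using this

lemma im_Li2_ofReal {x : ℝ} (hx : x ≤ 1) : (Li2 x).im = 0 := by
  have h : ∫ t in (0 : ℝ)..1, Complex.log (1 - x * t) / t
      = ↑(∫ t in (0 : ℝ)..1, Real.log (1 - x * t) / t) := by
    rw [← intervalIntegral.integral_ofReal]
    refine intervalIntegral.integral_congr fun t ht => ?_
    rw [uIcc_of_le zero_le_one] at ht
    have : 0 ≤ 1 - x * t := by nlinarith [ht.1, ht.2]
    simp only [ofReal_div, ofReal_log this]
    push_cast
    ring
  simp [Li2, h]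

lemma im_Li2_inv {w : ℂ} (hw : -w ∈ slitPlane) :
    (Li2 w⁻¹).im = -(Li2 w).im - Real.log ‖w‖ * arg (-w) := by
  have h := congrArg im (Li2_neg_add_Li2_neg_inv hw)
  have hLi2 : (Li2 (-1)).im = 0 := by simpa using im_Li2_ofReal (x := -1) (by norm_num)
  simp only [neg_neg, inv_neg, pow_two, add_im, div_ofNat_im, mul_im, log_re, norm_neg, log_im,
    re_ofNat, hLi2, mul_zero, im_ofNat, zero_mul, add_zero] at h
  linarith

lemma neg_exp_psiP {z : ℂ} (hz : z ≠ 0) : -exp (psiP z) = z := by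
  rw [psiP, Complex.exp_sub, exp_pi_mul_I, exp_log hz, div_neg, div_one, neg_neg]

lemma neg_exp_psiM {z : ℂ} (hz : z ≠ 0) : -exp (psiM z) = z⁻¹ := by
  rw [psiM, Complex.exp_neg, Complex.exp_sub, exp_pi_mul_I, exp_log hz, div_neg, div_one,
    inv_neg, neg_neg]

@[simp] lemma psiP_re (z : ℂ) : (psiP z).re = Real.log ‖z‖ := by simp [psiP, log_re]
@[simp] lemma psiP_im (z : ℂ) : (psiP z).im = arg z - π := by simp [psiP, log_im]
@[simp] lemma psiM_re (z : ℂ) : (psiM z).re = -Real.log ‖z‖ := by simp [psiM, log_re]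
@[simp] lemma psiM_im (z : ℂ) : (psiM z).im = π - arg z := by simp [psiM, log_im]

lemma re_pot (y₁ y₂ y₃ : ℂ) :
    (pot y₁ y₂ y₃).re = -(y₁ ^ 2 - y₁ * y₂ + y₂ * y₃ + y₃ ^ 2 / 2).im - π * y₁.re + π * y₃.re
      - (Li2 (-exp y₁)).im + (Li2 (-exp y₂)).im - 3 * (Li2 (-exp y₃)).im := by
  simp only [pot, neg_mul, add_re, sub_re, mul_re, I_re, div_ofNat_re, zero_mul, I_im, add_im,
    sub_im, mul_im, div_ofNat_im, one_mul, zero_sub, neg_add_rev, neg_sub, neg_re, ofReal_re,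
    ofReal_im, sub_zero, sub_neg_eq_add, re_ofNat, mul_zero, im_ofNat, mul_one, sub_self, add_zero]
  ring

lemma log_sub_one_div_self {z : ℂ} (hz : 0 < z.im) :
    Complex.log ((z - 1) / z) = Complex.log (z - 1) - Complex.log z := by
  have him : (z - 1).im = z.im := by simp
  refine log_div_of_im_mul_nonneg (mem_slitPlane_iff.2 (.inr (him ▸ hz.ne')))
    (mem_slitPlane_iff.2 (.inr hz.ne')) ?_
  rw [him]
  exact mul_self_nonneg _

lemma log_one_div_one_sub {z : ℂ} (hz : 0 < z.im) :
    Complex.log (1 / (1 - z)) = -Complex.log (1 - z) := by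
  have him : (1 - z).im ≠ 0 := by simpa using hz.ne'
  rw [one_div, log_inv _ (slitPlane_arg_ne_pi (mem_slitPlane_iff.2 (.inr him)))]

lemma arg_sub_one {z : ℂ} (hz : 0 < z.im) : arg (z - 1) = arg (1 - z) + π := by
  rw [← neg_sub, arg_neg_eq_arg_add_pi_of_im_neg (by simpa using hz)]

/-- at a solution of (E1), (E2), (E3) in `ℍ³`, the real part of
`S` at `ψ(z₁,z₂,z₃)` equals `-(D(z₁) + D(z₂) + 3 D(z₃))`, i.e. minus the
hyperbolic volume of `S³∖7₃`. -/
theorem reS_eq_neg_volume (z₁ z₂ z₃ : ℂ)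
    (h₁ : 0 < z₁.im) (h₂ : 0 < z₂.im) (h₃ : 0 < z₃.im)
    (hE1 : Complex.log z₃ =
      Complex.log ((z₁ - 1) / z₁) + Complex.log (1 / (1 - z₂)))
    (hE2 : Complex.log z₃ = Complex.log z₁ - Complex.log ((z₂ - 1) / z₂))
    (hE3 : Complex.log z₁ + Complex.log (1 / (1 - z₂)) +
      3 * Complex.log (1 / (1 - z₃)) = 2 * (π : ℂ) * Complex.I) :
    (pot (psiP z₁) (psiM z₂) (psiP z₃)).re = -(BW z₁ + BW z₂ + 3 * BW z₃) := by
  have e₁ : arg z₃ = arg (1 - z₁) + π - arg z₁ - arg (1 - z₂) := by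
    have := congrArg im hE1
    simp only [log_sub_one_div_self h₁, log_one_div_one_sub h₂, add_im, sub_im, neg_im, log_im,
      arg_sub_one h₁] at this
    linarith
  have e₂ : arg z₃ = arg z₁ - arg (1 - z₂) - π + arg z₂ := by
    have := congrArg im hE2
    simp only [log_sub_one_div_self h₂, sub_im, log_im, arg_sub_one h₂] at this
    linarith
  have e₃ : arg z₁ - arg (1 - z₂) - 3 * arg (1 - z₃) = 2 * π := by
    have := congrArg im hE3
    rw [log_one_div_one_sub h₂, log_one_div_one_sub h₃] at this
    simp only [mul_neg, add_im, log_im, neg_im, mul_im, re_ofNat, im_ofNat, zero_mul, add_zero,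
      mul_re, ofReal_re, ofReal_im, mul_zero, sub_zero, I_im, mul_one, I_re] at this
    linarith
  have hz : ∀ z : ℂ, 0 < z.im → z ≠ 0 := fun z hz h => by simp [h] at hz
  rw [re_pot, neg_exp_psiP (hz z₁ h₁), neg_exp_psiM (hz z₂ h₂), neg_exp_psiP (hz z₃ h₃),
    im_Li2_inv (mem_slitPlane_iff.2 (.inr (by simpa using h₂.ne'))),
    arg_neg_eq_arg_sub_pi_of_im_pos h₂]
  simp only [BW, pow_two, add_im, sub_im, mul_im, div_ofNat_im, psiP_re, psiP_im, psiM_re, psiM_im]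
  linear_combination (Real.log ‖z₁‖ + Real.log ‖z₂‖ - Real.log ‖z₃‖) * e₂
    - Real.log ‖z₁‖ * e₁ - Real.log ‖z₃‖ * e₃
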